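/- arXiv:1708.08048 — 2 statements merged into one kernel-verified Lean document; each statement's English description precedes it below -/
import Mathlib

section
/- Binomial inverse (Woodbury) formula for the regularized Newton system: Let n, m be positive integers, Q a real n × n orthogonal matrix (QQᵀ = QᵀQ = I), Λ = diag(λ₁, …, λₙ) a diagonal matrix with all λᵢ ∈ [0,1], μ > 0, and A an m × n real matrix with AAᵀ = I_m. Define H = Q((μ+1)I − Λ)Qᵀ, W = Q(I − 2Λ)Qᵀ, and T = Q L Qᵀ with L = diag(λᵢ μ / (μ + 1 − λᵢ)). Then the m × m matrix (μ²/(2μ+1)) I_m + A T Aᵀ is invertible, the n × n matrix H − AᵀAW is invertible, and (H − AᵀAW)⁻¹ = (1/(μ(μ+1))) (μ I + T) (I + Aᵀ ((μ²/(2μ+1)) I_m + A T Aᵀ)⁻¹ A ((μ/(2μ+1)) I − T)). -/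
/-!
Conjugation by the orthogonal matrix `Q` is an algebra homomorphism on diagonal matrices, so `H`,
`W`, `T` and the candidate inverse `E = (μ I + T) / (μ (μ + 1))` of `H` are all images of
functions of the `λᵢ`, and the identities `H E = I` and `W E = k⁻¹ G`, with
`G = μ / (2μ + 1) I - T` and `k = μ (μ + 1) / (2μ + 1)`, reduce to scalar identities.
Hence `(H - Aᵀ A W) E = I - k⁻¹ Aᵀ (A G)`, a rank-`m` perturbation of the identity, which the
Woodbury identity inverts through the `m × m` matrix `k I - A G Aᵀ`. Since `A Aᵀ = I`, this
matrix is `μ² / (2μ + 1) I + A T Aᵀ`, which is positive definite because `T` is positive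
semidefinite.
-/

open Matrix

section Woodbury

variable {K : Type*} [Field K] {n m : Type*} [Fintype n] [DecidableEq n] [Fintype m]
  [DecidableEq m]

theorem one_sub_smul_mul_mul_one_add_mul_inv_mul {k : K} (hk : k ≠ 0)
    (U : Matrix n m K) (V : Matrix m n K) (hS : IsUnit (k • 1 - V * U)) :
    (1 - k⁻¹ • (U * V)) * (1 + U * (k • 1 - V * U)⁻¹ * V) = 1 := by
  set S := k • 1 - V * U with hS_def
  have hVU : V * U * S⁻¹ = k • S⁻¹ - 1 := by
    rw [show V * U = k • 1 - S by rw [hS_def]; abel, sub_mul, smul_mul, Matrix.one_mul,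
      mul_nonsing_inv S ((isUnit_iff_isUnit_det S).mp hS)]
  calc (1 - k⁻¹ • (U * V)) * (1 + U * S⁻¹ * V)
      = 1 + U * S⁻¹ * V - k⁻¹ • (U * V) - k⁻¹ • (U * (V * U * S⁻¹) * V) := by
        simp only [sub_mul, mul_add, Matrix.mul_one, Matrix.one_mul, smul_mul, Matrix.mul_assoc]
        abel
    _ = 1 := by
        rw [hVU, Matrix.mul_sub, Matrix.sub_mul, Matrix.mul_smul, Matrix.smul_mul, smul_sub,
          smul_smul, inv_mul_cancel₀ hk, one_smul, Matrix.mul_one]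
        abel

theorem sub_mul_mul_mul_one_add_mul_inv_mul_eq_one {k : K} (hk : k ≠ 0) {H W E G : Matrix n n K}
    (hHE : H * E = 1) (hWE : W * E = k⁻¹ • G) (U : Matrix n m K) (V : Matrix m n K)
    (hS : IsUnit (k • 1 - V * G * U)) :
    (H - U * V * W) * (E * (1 + U * (k • 1 - V * G * U)⁻¹ * V * G)) = 1 := by
  have hE : (H - U * V * W) * E = 1 - k⁻¹ • (U * (V * G)) := by
    rw [Matrix.sub_mul, hHE, Matrix.mul_assoc, hWE, Matrix.mul_smul, Matrix.mul_assoc]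
  rw [← Matrix.mul_assoc, hE]
  simpa only [Matrix.mul_assoc] using one_sub_smul_mul_mul_one_add_mul_inv_mul hk U (V * G) hS

end Woodbury

theorem smul_one_add_mul_mul_transpose_eq_sub {K n m : Type*} [Field K] [Fintype n]
    [DecidableEq n] [DecidableEq m] {A : Matrix m n K} (hA : A * Aᵀ = 1)
    (a c : K) (T : Matrix n n K) :
    c • 1 + A * T * Aᵀ = (a + c) • 1 - A * (a • 1 - T) * Aᵀ := by
  rw [Matrix.mul_sub, Matrix.sub_mul, Matrix.mul_smul, Matrix.smul_mul, Matrix.mul_one, hA,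
    add_smul]
  abel

section OrthogonalConjugation

variable {n R : Type*} [Fintype n] [DecidableEq n] [CommRing R] [StarRing R] [TrivialStar R]

theorem mem_unitary_of_orthogonal {Q : Matrix n n R} (hQ : Q * Qᵀ = 1 ∧ Qᵀ * Q = 1) :
    Q ∈ unitary (Matrix n n R) := by
  rw [Unitary.mem_iff, star_eq_conjTranspose, conjTranspose_eq_transpose_of_trivial]
  exact hQ.symm

def orthogonalConjDiagonal (Q : Matrix n n R) (hQ : Q * Qᵀ = 1 ∧ Qᵀ * Q = 1) :
    (n → R) →ₐ[R] Matrix n n R :=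
  (Unitary.conjStarAlgAut R _ ⟨Q, mem_unitary_of_orthogonal hQ⟩).toAlgEquiv.toAlgHom.comp
    (diagonalAlgHom R)

theorem orthogonalConjDiagonal_apply {Q : Matrix n n R} (hQ : Q * Qᵀ = 1 ∧ Qᵀ * Q = 1)
    (d : n → R) : orthogonalConjDiagonal Q hQ d = Q * diagonal d * Qᵀ := by
  rw [← conjTranspose_eq_transpose_of_trivial]
  rfl

theorem posSemidef_orthogonalConjDiagonal [PartialOrder R] [StarOrderedRing R]
    {Q : Matrix n n R} (hQ : Q * Qᵀ = 1 ∧ Qᵀ * Q = 1) {d : n → R} (hd : 0 ≤ d) :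
    (orthogonalConjDiagonal Q hQ d).PosSemidef := by
  rw [orthogonalConjDiagonal_apply, ← conjTranspose_eq_transpose_of_trivial]
  exact (posSemidef_diagonal_iff.mpr hd).mul_mul_conjTranspose_same Q

end OrthogonalConjugation

theorem posDef_smul_one_add_mul_mul_transpose {n m : Type*} [Fintype n] [Fintype m]
    [DecidableEq m] {c : ℝ} (hc : 0 < c) {T : Matrix n n ℝ} (hT : T.PosSemidef)
    (A : Matrix m n ℝ) : (c • 1 + A * T * Aᵀ).PosDef := by
  rw [← conjTranspose_eq_transpose_of_trivial]
  exact (PosDef.one.smul hc).add_posSemidef (hT.mul_mul_conjTranspose_same A)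

section Spectral

variable {ι : Type*} {μ : ℝ} {lam : ι → ℝ}

theorem smul_one_sub_mul_smul_smul_one_add_eq_one (hμ : 0 < μ)
    (hd : ∀ i, μ + 1 - lam i ≠ 0) :
    ((μ + 1) • 1 - lam) *
      ((1 / (μ * (μ + 1))) • (μ • 1 + fun i => lam i * μ / (μ + 1 - lam i))) = 1 := by
  ext i
  have := hd i
  simp only [Pi.mul_apply, Pi.smul_apply, Pi.sub_apply, Pi.add_apply, Pi.one_apply, smul_eq_mul]
  field_simp
  ring

theorem one_sub_two_smul_mul_smul_smul_one_add_eq (hμ : 0 < μ)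
    (hd : ∀ i, μ + 1 - lam i ≠ 0) :
    (1 - (2 : ℝ) • lam) *
      ((1 / (μ * (μ + 1))) • (μ • 1 + fun i => lam i * μ / (μ + 1 - lam i))) =
      (μ * (μ + 1) / (2 * μ + 1))⁻¹ •
        ((μ / (2 * μ + 1)) • 1 - fun i => lam i * μ / (μ + 1 - lam i)) := by
  ext i
  have := hd i
  simp only [Pi.mul_apply, Pi.smul_apply, Pi.sub_apply, Pi.add_apply, Pi.one_apply, smul_eq_mul]
  field_simp
  ring

end Spectral

theorem woodbury_regularized_newton_system_general
    (n m : ℕ)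
    (Q : Matrix (Fin n) (Fin n) ℝ) (hQ : Q * Qᵀ = 1 ∧ Qᵀ * Q = 1)
    (lam : Fin n → ℝ) (hlam : ∀ i, lam i ∈ Set.Icc (0 : ℝ) 1)
    (μ : ℝ) (hμ : 0 < μ)
    (A : Matrix (Fin m) (Fin n) ℝ) (hA : A * Aᵀ = 1)
    (H W T : Matrix (Fin n) (Fin n) ℝ)
    (hH : H = Q * ((μ + 1) • (1 : Matrix (Fin n) (Fin n) ℝ)
                    - Matrix.diagonal lam) * Qᵀ)
    (hW : W = Q * ((1 : Matrix (Fin n) (Fin n) ℝ)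
                    - (2 : ℝ) • Matrix.diagonal lam) * Qᵀ)
    (hT : T = Q * Matrix.diagonal (fun i => lam i * μ / (μ + 1 - lam i)) * Qᵀ) :
    IsUnit ((μ ^ 2 / (2 * μ + 1)) • (1 : Matrix (Fin m) (Fin m) ℝ)
              + A * T * Aᵀ) ∧
      IsUnit (H - Aᵀ * A * W) ∧
      (H - Aᵀ * A * W)⁻¹ =
        (1 / (μ * (μ + 1))) •
          ((μ • (1 : Matrix (Fin n) (Fin n) ℝ) + T) *
            ((1 : Matrix (Fin n) (Fin n) ℝ) +
              Aᵀ * ((μ ^ 2 / (2 * μ + 1)) • (1 : Matrix (Fin m) (Fin m) ℝ)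
                      + A * T * Aᵀ)⁻¹ * A *
                ((μ / (2 * μ + 1)) • (1 : Matrix (Fin n) (Fin n) ℝ) - T))) := by
  set φ := orthogonalConjDiagonal Q hQ
  set t : Fin n → ℝ := fun i => lam i * μ / (μ + 1 - lam i)
  set k : ℝ := μ * (μ + 1) / (2 * μ + 1)
  have hd (i : Fin n) : μ + 1 - lam i ≠ 0 := by linarith [(hlam i).2]
  have ht : 0 ≤ t := fun i => div_nonneg (mul_nonneg (hlam i).1 hμ.le) (by linarith [(hlam i).2])
  have hH : H = φ ((μ + 1) • 1 - lam) := by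
    rw [hH, orthogonalConjDiagonal_apply, ← diagonal_one, ← diagonal_smul, diagonal_sub]; rfl
  have hW : W = φ (1 - (2 : ℝ) • lam) := by
    rw [hW, orthogonalConjDiagonal_apply, ← diagonal_one, ← diagonal_smul, diagonal_sub]; rfl
  have hT : T = φ t := by rw [hT, orthogonalConjDiagonal_apply]
  have hE : (1 / (μ * (μ + 1))) • (μ • 1 + T) = φ ((1 / (μ * (μ + 1))) • (μ • 1 + t)) := by
    rw [hT, map_smul, map_add, map_smul, map_one]
  have hHE : H * ((1 / (μ * (μ + 1))) • (μ • 1 + T)) = 1 := by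
    rw [hH, hE, ← map_mul, smul_one_sub_mul_smul_smul_one_add_eq_one hμ hd, map_one]
  have hWE : W * ((1 / (μ * (μ + 1))) • (μ • 1 + T)) = k⁻¹ • ((μ / (2 * μ + 1)) • 1 - T) := by
    rw [hW, hE, ← map_mul, one_sub_two_smul_mul_smul_smul_one_add_eq hμ hd, hT, map_smul, map_sub,
      map_smul, map_one]
  have hS : (μ ^ 2 / (2 * μ + 1)) • (1 : Matrix (Fin m) (Fin m) ℝ) + A * T * Aᵀ
      = k • 1 - A * ((μ / (2 * μ + 1)) • 1 - T) * Aᵀ := by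
    rw [smul_one_add_mul_mul_transpose_eq_sub hA (μ / (2 * μ + 1))]
    congr 2
    simp only [k]
    field_simp
    ring
  have hSunit := (posDef_smul_one_add_mul_mul_transpose (c := μ ^ 2 / (2 * μ + 1))
    (by positivity) (hT ▸ posSemidef_orthogonalConjDiagonal hQ ht) A).isUnit
  have key := sub_mul_mul_mul_one_add_mul_inv_mul_eq_one (by positivity) hHE hWE Aᵀ A
    (hS ▸ hSunit)
  rw [← hS] at key
  exact ⟨hSunit, .of_mul_eq_one _ key, by rw [inv_eq_right_inv key, smul_mul]⟩

/-- Binomial inverse (Woodbury) formula for the regularized Newton system. -/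
theorem woodbury_regularized_newton_system
    (n m : ℕ) (hn : 0 < n) (hm : 0 < m)
    (Q : Matrix (Fin n) (Fin n) ℝ) (hQ : Q * Qᵀ = 1 ∧ Qᵀ * Q = 1)
    (lam : Fin n → ℝ) (hlam : ∀ i, lam i ∈ Set.Icc (0 : ℝ) 1)
    (μ : ℝ) (hμ : 0 < μ)
    (A : Matrix (Fin m) (Fin n) ℝ) (hA : A * Aᵀ = 1)
    (H W T : Matrix (Fin n) (Fin n) ℝ)
    (hH : H = Q * ((μ + 1) • (1 : Matrix (Fin n) (Fin n) ℝ)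
                    - Matrix.diagonal lam) * Qᵀ)
    (hW : W = Q * ((1 : Matrix (Fin n) (Fin n) ℝ)
                    - (2 : ℝ) • Matrix.diagonal lam) * Qᵀ)
    (hT : T = Q * Matrix.diagonal (fun i => lam i * μ / (μ + 1 - lam i)) * Qᵀ) :
    IsUnit ((μ ^ 2 / (2 * μ + 1)) • (1 : Matrix (Fin m) (Fin m) ℝ)
              + A * T * Aᵀ) ∧
      IsUnit (H - Aᵀ * A * W) ∧
      (H - Aᵀ * A * W)⁻¹ =
        (1 / (μ * (μ + 1))) •
          ((μ • (1 : Matrix (Fin n) (Fin n) ℝ) + T) *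
            ((1 : Matrix (Fin n) (Fin n) ℝ) +
              Aᵀ * ((μ ^ 2 / (2 * μ + 1)) • (1 : Matrix (Fin m) (Fin m) ℝ)
                      + A * T * Aᵀ)⁻¹ * A *
                ((μ / (2 * μ + 1)) • (1 : Matrix (Fin n) (Fin n) ℝ) - T))) :=
  woodbury_regularized_newton_system_general n m Q hQ lam hlam μ hμ A hA H W T hH hW hT
end

section
/- Positive semidefiniteness of the Douglas–Rachford generalized Jacobian: Let E be a real inner product space and let M, D : E → E be linear maps such that M is self-adjoint with 0 ≤ ⟨M x, x⟩ ≤ ‖x‖² for all x ∈ E, and D is self-adjoint and idempotent (D ∘ D = D). Then the linear map J = M + D ∘ (id − 2M) is positive semidefinite in the sense that ⟨J x, x⟩ ≥ 0 for all x ∈ E. -/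
/-!
Splitting `x = D x + (x - D x)` along the orthogonal projection `D`, the quadratic form of
`J = M + D (1 - 2M)` becomes `⟪(1 - M) D x, D x⟫ + ⟪M (x - D x), x - D x⟫`, and both terms are
nonnegative because `0 ≤ M ≤ 1` in the Loewner order.
-/

open scoped RealInnerProductSpace

namespace LinearMap

variable {E : Type*} [NormedAddCommGroup E] [InnerProductSpace ℝ E]

theorem le_one_of_inner_apply_self_le_norm_sq {T : E →ₗ[ℝ] E} (hT : T.IsSymmetric)
    (h : ∀ x, ⟪T x, x⟫ ≤ ‖x‖ ^ 2) : T ≤ 1 := by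
  refine (isPositive_iff _).2 ⟨IsSymmetric.sub IsSymmetric.one hT, fun x => ?_⟩
  simpa [inner_sub_left, real_inner_self_eq_norm_sq] using h x

def drJacobian (M D : E →ₗ[ℝ] E) : E →ₗ[ℝ] E :=
  M + D ∘ₗ (id - (2 : ℝ) • M)

theorem IsSymmetric.inner_map_map_of_isIdempotentElem {D : E →ₗ[ℝ] E} (hD : D.IsSymmetric)
    (hDD : IsIdempotentElem D) (x : E) : ⟪D x, D x⟫ = ⟪x, D x⟫ := by
  rw [hD, ← Module.End.mul_apply, hDD.eq]

theorem inner_drJacobian_apply_self {M D : E →ₗ[ℝ] E} (hM : M.IsSymmetric)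
    (hD : D.IsSymmetric) (hDD : IsIdempotentElem D) (x : E) :
    ⟪drJacobian M D x, x⟫ = ⟪(1 - M) (D x), D x⟫ + ⟪M (x - D x), x - D x⟫ := by
  have hMyx : ⟪M (D x), x⟫ = ⟪M x, D x⟫ := by rw [hM, real_inner_comm]
  simp only [drJacobian, add_apply, comp_apply, sub_apply, smul_apply, id_apply,
    Module.End.one_apply, map_sub, inner_add_left, inner_sub_left, inner_sub_right,
    real_inner_smul_left, hD _ x, hD.inner_map_map_of_isIdempotentElem hDD, hMyx]
  ring

theorem inner_drJacobian_apply_self_nonneg {M D : E →ₗ[ℝ] E} (hM₀ : 0 ≤ M) (hM₁ : M ≤ 1)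
    (hD : D.IsSymmetric) (hDD : IsIdempotentElem D) (x : E) :
    0 ≤ ⟪drJacobian M D x, x⟫ := by
  have hM := (nonneg_iff_isPositive M).1 hM₀
  rw [inner_drJacobian_apply_self hM.isSymmetric hD hDD]
  exact add_nonneg (hM₁.inner_nonneg_left _) (hM.inner_nonneg_left _)

end LinearMap

/-- Positive semidefiniteness of the Douglas–Rachford generalized Jacobian
`J = M + D ∘ (id − 2M)`. -/
theorem dr_generalized_jacobian_psd
    {E : Type*} [NormedAddCommGroup E] [InnerProductSpace ℝ E]
    (M D : E →ₗ[ℝ] E)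
    (hMsa : ∀ x y : E, ⟪M x, y⟫ = ⟪x, M y⟫)
    (hMpos : ∀ x : E, 0 ≤ ⟪M x, x⟫)
    (hMcontr : ∀ x : E, ⟪M x, x⟫ ≤ ‖x‖ ^ 2)
    (hDsa : ∀ x y : E, ⟪D x, y⟫ = ⟪x, D y⟫)
    (hDidem : D ∘ₗ D = D)
    (J : E →ₗ[ℝ] E)
    (hJ : J = M + D ∘ₗ (LinearMap.id - (2 : ℝ) • M)) :
    ∀ x : E, 0 ≤ ⟪J x, x⟫ := by
  have hM₀ : 0 ≤ M :=
    (LinearMap.nonneg_iff_isPositive M).2 ((LinearMap.isPositive_iff M).2 ⟨hMsa, hMpos⟩)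
  have hM₁ : M ≤ 1 := LinearMap.le_one_of_inner_apply_self_le_norm_sq hMsa hMcontr
  subst hJ
  exact LinearMap.inner_drJacobian_apply_self_nonneg hM₀ hM₁ hDsa hDidem
end
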